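/- arXiv:2604.17499 — 2 statements merged into one kernel-verified Lean document; each statement's English description precedes it below -/
import Mathlib

section
/- Let q > 2 be a real number. Then there exists a constant C > 0, depending only on q, such that for every U > 0 and every w ∈ ℝ one has ||U + w|^q − U^q − q·U^{q−1}·w − (q(q−1)/2)·U^{q−2}·w²| ≤ C·(|w|^q + U^{(q−3)₊}·|w|^{q−(q−3)₊}), where (q−3)₊ = max(q−3, 0). -/
/-!
Write `R(U, w)` for the second-order Taylor remainder of `t ↦ |t| ^ q` at `U`.

When `|w| ≤ U / 2` the segment from `U` to `U + w` stays in `[U / 2, 3U / 2]`, where the third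
derivative `q(q-1)(q-2) t ^ (q-3)` is `O(U ^ (q-3))`; integrating three times from `w = 0` gives
`|R| = O(U ^ (q-3) |w| ^ 3)`. For `q ≥ 3` this is the second term of the bound, and for `q < 3`
the negative exponent and `|w| ≤ U` give `U ^ (q-3) |w| ^ 3 ≤ |w| ^ q`.

When `|w| > U / 2`, each of the four terms of `R` is `O(|w| ^ q)` since `U` and `|U + w|` are
`O(|w|)`.
-/

open Real Set

lemma abs_le_mul_abs_pow_succ_of_hasDerivAt {f f' : ℝ → ℝ} {r M : ℝ} {k : ℕ}
    (hf : ∀ s, |s| ≤ r → HasDerivAt f (f' s) s)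
    (hf' : ∀ s, |s| ≤ r → |f' s| ≤ M * |s| ^ k) (h0 : f 0 = 0) {w : ℝ} (hw : |w| ≤ r) :
    |f w| ≤ M * |w| ^ (k + 1) := by
  rcases eq_or_ne w 0 with rfl | hw0
  · simp [h0]
  have hM : 0 ≤ M := nonneg_of_mul_nonneg_left ((abs_nonneg _).trans (hf' w hw))
    (pow_pos (abs_pos.2 hw0) k)
  have hball : ∀ s ∈ Metric.closedBall (0 : ℝ) |w|, |s| ≤ |w| := fun s hs => by
    simpa using hs
  have hbound : ∀ s ∈ Metric.closedBall (0 : ℝ) |w|, ‖f' s‖ ≤ M * |w| ^ k := fun s hs =>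
    (hf' s ((hball s hs).trans hw)).trans
      (mul_le_mul_of_nonneg_left (pow_le_pow_left₀ (abs_nonneg s) (hball s hs) k) hM)
  have hmvt := (convex_closedBall (0 : ℝ) |w|).norm_image_sub_le_of_norm_hasDerivWithin_le
    (fun s hs => (hf s ((hball s hs).trans hw)).hasDerivWithinAt) hbound
    (Metric.mem_closedBall_self (abs_nonneg w)) (by simp : w ∈ Metric.closedBall (0 : ℝ) |w|)
  simpa [h0, pow_succ, mul_assoc] using hmvt

lemma hasDerivAt_const_add_rpow (U p : ℝ) {s : ℝ} (h : 0 < U + s) :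
    HasDerivAt (fun x => (U + x) ^ p) (p * (U + s) ^ (p - 1)) s := by
  simpa using ((hasDerivAt_id s).const_add U).rpow_const (p := p) (Or.inl h.ne')

lemma rpow_le_max_of_mem_Icc {a b t : ℝ} (p : ℝ) (ha : 0 < a) (ht : t ∈ Icc a b) :
    t ^ p ≤ max (a ^ p) (b ^ p) := by
  rcases le_total 0 p with hp | hp
  · exact le_max_of_le_right (rpow_le_rpow (ha.le.trans ht.1) ht.2 hp)
  · exact le_max_of_le_left (rpow_le_rpow_of_nonpos ha ht.1 hp)

lemma rpow_add_le_of_abs_le_half {U s : ℝ} (p : ℝ) (hU : 0 < U) (hs : |s| ≤ U / 2) :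
    (U + s) ^ p ≤ max ((1 / 2 : ℝ) ^ p) ((3 / 2) ^ p) * U ^ p := by
  obtain ⟨hs₁, hs₂⟩ := abs_le.1 hs
  have h := rpow_le_max_of_mem_Icc p (by positivity : 0 < 1 / 2 * U)
    (⟨by linarith, by linarith⟩ : U + s ∈ Icc (1 / 2 * U) (3 / 2 * U))
  rwa [mul_rpow (by norm_num) hU.le, mul_rpow (by norm_num) hU.le,
    ← max_mul_of_nonneg _ _ (rpow_nonneg hU.le p)] at h

lemma abs_taylor_remainder_rpow_le_of_abs_le_half {q U w : ℝ} (hq : 2 ≤ q) (hU : 0 < U)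
    (hw : |w| ≤ U / 2) :
    |(U + w) ^ q - U ^ q - q * U ^ (q - 1) * w - q * (q - 1) / 2 * U ^ (q - 2) * w ^ 2| ≤
      q * (q - 1) * (q - 2) * max ((1 / 2 : ℝ) ^ (q - 3)) ((3 / 2) ^ (q - 3)) *
        (U ^ (q - 3) * |w| ^ 3) := by
  have hpos : ∀ s, |s| ≤ U / 2 → 0 < U + s := fun s hs => by linarith [neg_abs_le s]
  set B := (q - 2) * max ((1 / 2 : ℝ) ^ (q - 3)) ((3 / 2) ^ (q - 3)) * U ^ (q - 3)
  have hq₁ : 0 ≤ q * (q - 1) := by nlinarith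
  have h₂ : ∀ s, |s| ≤ U / 2 → |(U + s) ^ (q - 2) - U ^ (q - 2)| ≤ B * |s| ^ (0 + 1) := by
    refine fun s => abs_le_mul_abs_pow_succ_of_hasDerivAt
      (f := fun x => (U + x) ^ (q - 2) - U ^ (q - 2)) (f' := fun x => (q - 2) * (U + x) ^ (q - 3))
      (fun x hx => ?_) (fun x hx => ?_) (by simp)
    · exact ((hasDerivAt_const_add_rpow U (q - 2) (hpos x hx)).sub_const
        (U ^ (q - 2))).congr_deriv (by ring_nf)
    · rw [abs_mul, abs_of_nonneg (by linarith), abs_of_pos (rpow_pos_of_pos (hpos x hx) _)]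
      exact (mul_le_mul_of_nonneg_left (rpow_add_le_of_abs_le_half _ hU hx) (by linarith)).trans_eq
        (by ring)
  have h₁ : ∀ s, |s| ≤ U / 2 →
      |q * (U + s) ^ (q - 1) - q * U ^ (q - 1) - q * (q - 1) * U ^ (q - 2) * s| ≤
        q * (q - 1) * B * |s| ^ (1 + 1) := by
    refine fun s => abs_le_mul_abs_pow_succ_of_hasDerivAt
      (f := fun x => q * (U + x) ^ (q - 1) - q * U ^ (q - 1) - q * (q - 1) * U ^ (q - 2) * x)
      (f' := fun x => q * (q - 1) * ((U + x) ^ (q - 2) - U ^ (q - 2)))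
      (fun x hx => ?_) (fun x hx => ?_) (by simp)
    · have := (((hasDerivAt_const_add_rpow U (q - 1) (hpos x hx)).const_mul q).sub_const
        (q * U ^ (q - 1))).sub ((hasDerivAt_id x).const_mul (q * (q - 1) * U ^ (q - 2)))
      exact this.congr_deriv (by ring_nf)
    · rw [abs_mul, abs_of_nonneg hq₁]
      exact (mul_le_mul_of_nonneg_left (h₂ x hx) hq₁).trans_eq (by ring)
  have h₀ := abs_le_mul_abs_pow_succ_of_hasDerivAt (k := 2)
    (f := fun x =>
      (U + x) ^ q - U ^ q - q * U ^ (q - 1) * x - q * (q - 1) / 2 * U ^ (q - 2) * x ^ 2)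
    (f' := fun x => q * (U + x) ^ (q - 1) - q * U ^ (q - 1) - q * (q - 1) * U ^ (q - 2) * x)
    (fun x hx => ?_) h₁ (by simp) hw
  · calc _ ≤ q * (q - 1) * B * |w| ^ 3 := h₀
      _ = _ := by ring
  · have := (((hasDerivAt_const_add_rpow U q (hpos x hx)).sub_const (U ^ q)).sub
      ((hasDerivAt_id x).const_mul (q * U ^ (q - 1)))).sub
      ((hasDerivAt_pow 2 x).const_mul (q * (q - 1) / 2 * U ^ (q - 2)))
    exact this.congr_deriv (by ring)

lemma rpow_sub_three_mul_pow_three_le {q U x : ℝ} (hx : 0 ≤ x) (hxU : x ≤ U) :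
    U ^ (q - 3) * x ^ 3 ≤ x ^ q + U ^ max (q - 3) 0 * x ^ (q - max (q - 3) 0) := by
  rcases hx.eq_or_lt with rfl | hx
  · have : (0 : ℝ) ≤ U := hxU
    simp only [ne_eq, OfNat.ofNat_ne_zero, not_false_eq_true, zero_pow, mul_zero]
    positivity
  rcases le_total 3 q with h3 | h3
  · rw [max_eq_left (by linarith), show q - (q - 3) = ((3 : ℕ) : ℝ) by norm_num, rpow_natCast]
    linarith [rpow_nonneg hx.le q]
  · have hle : U ^ (q - 3) * x ^ 3 ≤ x ^ q := by
      calc U ^ (q - 3) * x ^ 3 ≤ x ^ (q - 3) * x ^ ((3 : ℕ) : ℝ) := by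
            rw [rpow_natCast]
            exact mul_le_mul_of_nonneg_right (rpow_le_rpow_of_nonpos hx hxU (by linarith))
              (by positivity)
        _ = x ^ q := by rw [← rpow_add hx]; norm_num
    rw [max_eq_right (by linarith), rpow_zero, one_mul, sub_zero]
    linarith [rpow_nonneg hx.le q]

lemma rpow_sub_natCast_mul_pow_le {q U x : ℝ} {k : ℕ} (hU : 0 ≤ U) (hx : 0 < x)
    (hUx : U ≤ 2 * x) (hk : (k : ℝ) ≤ q) :
    U ^ (q - k) * x ^ k ≤ 2 ^ (q - k) * x ^ q := by
  calc U ^ (q - k) * x ^ k ≤ (2 * x) ^ (q - k) * x ^ k := by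
        gcongr
    _ = 2 ^ (q - k) * (x ^ (q - k) * x ^ (k : ℝ)) := by
        rw [mul_rpow zero_le_two hx.le, rpow_natCast]
        ring
    _ = 2 ^ (q - k) * x ^ q := by rw [← rpow_add hx, sub_add_cancel]

lemma abs_taylor_remainder_rpow_le_of_half_lt_abs {q U w : ℝ} (hq : 2 ≤ q) (hU : 0 < U)
    (hw : U / 2 < |w|) :
    |(|U + w|) ^ q - U ^ q - q * U ^ (q - 1) * w - q * (q - 1) / 2 * U ^ (q - 2) * w ^ 2| ≤
      (3 ^ q + 2 ^ q + q * 2 ^ (q - 1) + q * (q - 1) / 2 * 2 ^ (q - 2)) * |w| ^ q := by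
  have hw₀ : 0 < |w| := by linarith
  have hUw : U ≤ 2 * |w| := by linarith
  have h₀ : U ^ q ≤ 2 ^ q * |w| ^ q := by
    simpa using rpow_sub_natCast_mul_pow_le (k := 0) hU.le hw₀ hUw (by push_cast; linarith)
  have h₁ : U ^ (q - 1) * |w| ≤ 2 ^ (q - 1) * |w| ^ q := by
    simpa using rpow_sub_natCast_mul_pow_le (k := 1) hU.le hw₀ hUw (by push_cast; linarith)
  have h₂ : U ^ (q - 2) * w ^ 2 ≤ 2 ^ (q - 2) * |w| ^ q := by
    simpa using rpow_sub_natCast_mul_pow_le (k := 2) hU.le hw₀ hUw (by push_cast; linarith)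
  have hsum : |U + w| ^ q ≤ 3 ^ q * |w| ^ q := by
    calc |U + w| ^ q ≤ (3 * |w|) ^ q := by
          gcongr
          linarith [abs_add_le U w, abs_of_pos hU]
      _ = 3 ^ q * |w| ^ q := mul_rpow (by norm_num) (abs_nonneg w)
  have hq₁ : 0 ≤ q * (q - 1) / 2 := by nlinarith
  have hlin : |q * U ^ (q - 1) * w| ≤ q * 2 ^ (q - 1) * |w| ^ q := by
    rw [abs_mul, abs_of_nonneg (by positivity), mul_assoc, mul_assoc]
    exact mul_le_mul_of_nonneg_left h₁ (by linarith)
  have hquad :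
      q * (q - 1) / 2 * U ^ (q - 2) * w ^ 2 ≤ q * (q - 1) / 2 * 2 ^ (q - 2) * |w| ^ q := by
    rw [mul_assoc, mul_assoc]
    exact mul_le_mul_of_nonneg_left h₂ hq₁
  have hquad₀ : 0 ≤ q * (q - 1) / 2 * U ^ (q - 2) * w ^ 2 := by positivity
  rw [abs_le]
  constructor <;>
    linarith [rpow_nonneg (abs_nonneg (U + w)) q, rpow_nonneg hU.le q, abs_le.1 hlin]

theorem taylor_second_order_rpow (q : ℝ) (hq : 2 < q) :
    ∃ C > 0, ∀ U w : ℝ, 0 < U →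
      abs (|U + w| ^ q - U ^ q - q * U ^ (q - 1) * w -
          q * (q - 1) / 2 * U ^ (q - 2) * w ^ 2) ≤
        C * (|w| ^ q + U ^ max (q - 3) 0 * |w| ^ (q - max (q - 3) 0)) := by
  set D := q * (q - 1) * (q - 2) * max ((1 / 2 : ℝ) ^ (q - 3)) ((3 / 2) ^ (q - 3))
  set E := 3 ^ q + 2 ^ q + q * 2 ^ (q - 1) + q * (q - 1) / 2 * 2 ^ (q - 2)
  have hD : 0 < D := mul_pos (mul_pos (mul_pos (by linarith) (by linarith)) (by linarith))
    (lt_max_of_lt_left (by positivity))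
  have hE : 0 < E := by
    have : 0 ≤ q - 1 := by linarith
    positivity
  refine ⟨D + E, by positivity, fun U w hU => ?_⟩
  have hsecond : 0 ≤ U ^ max (q - 3) 0 * |w| ^ (q - max (q - 3) 0) := by positivity
  rcases le_or_gt |w| (U / 2) with hw | hw
  · rw [abs_of_pos (by linarith [neg_abs_le w] : 0 < U + w)]
    calc _ ≤ D * (U ^ (q - 3) * |w| ^ 3) :=
          abs_taylor_remainder_rpow_le_of_abs_le_half hq.le hU hw
      _ ≤ D * (|w| ^ q + U ^ max (q - 3) 0 * |w| ^ (q - max (q - 3) 0)) := by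
          gcongr
          exact rpow_sub_three_mul_pow_three_le (abs_nonneg w) (by linarith)
      _ ≤ _ := by gcongr; exact le_add_of_nonneg_right hE.le
  · calc _ ≤ E * |w| ^ q := abs_taylor_remainder_rpow_le_of_half_lt_abs hq.le hU hw
      _ ≤ _ := mul_le_mul (le_add_of_nonneg_left hD.le) (le_add_of_nonneg_right hsecond)
          (by positivity) (by positivity)
end

section
/- Let n ≥ 5 be an integer. For every x ∈ ℝⁿ and every λ > 0, ∫_{ℝⁿ} U_{x,λ}(y)^{2n/(n−4)} dy = 𝒮₂^{n/4}, where 𝒮₂ = π²·n(n−4)(n²−4)·Γ(n/2)^{4/n}·Γ(n)^{−4/n}. -/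
open MeasureTheory

/-- The standard bubble `U_{x,λ}(y) = c_n (λ/(1+λ²‖y−x‖²))^{(n−4)/2}` with
`c_n = ((n−4)(n−2)n(n+2))^{(n−4)/8}`. -/
noncomputable def bubble (n : ℕ) (x : EuclideanSpace ℝ (Fin n)) (lam : ℝ)
    (y : EuclideanSpace ℝ (Fin n)) : ℝ :=
  (((n : ℝ) - 4) * ((n : ℝ) - 2) * (n : ℝ) * ((n : ℝ) + 2)) ^ (((n : ℝ) - 4) / 8) *
    (lam / (1 + lam ^ 2 * ‖y - x‖ ^ 2)) ^ (((n : ℝ) - 4) / 2)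

open Real Set Module

/-! Raised to the critical power `2n/(n-4)`, the bubble becomes the constant
`((n-4)(n-2)n(n+2))^{n/4}` times `(λ/(1+λ²‖y-x‖²))^n`, whose integral is invariant under
translation and under the dilation `y ↦ λ • y`, hence equals `∫ (1+‖y‖²)^{-n}`. In polar
coordinates and after `u = r²`, this is the Beta integral `∫₀^∞ u^{a-1} (1+u)^{-(a+b)} du` with
`a = b = n/2`, which `u = x/(1-x)` reduces to the Euler integral on `(0,1)`; the result
`π^{n/2} Γ(n/2) / Γ(n)` is exactly `𝒮₂^{n/4} / ((n-4)(n-2)n(n+2))^{n/4}`. -/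

theorem integral_rpow_mul_one_sub_rpow {a b : ℝ} (ha : 0 < a) (hb : 0 < b) :
    ∫ x in (0 : ℝ)..1, x ^ (a - 1) * (1 - x) ^ (b - 1) = Gamma a * Gamma b / Gamma (a + b) := by
  have hbeta : Complex.betaIntegral a b =
      ((∫ x in (0 : ℝ)..1, x ^ (a - 1) * (1 - x) ^ (b - 1) : ℝ) : ℂ) := by
    rw [Complex.betaIntegral, ← intervalIntegral.integral_ofReal]
    refine intervalIntegral.integral_congr fun x hx => ?_
    rw [uIcc_of_le zero_le_one] at hx
    push_cast
    rw [Complex.ofReal_cpow hx.1, Complex.ofReal_cpow (sub_nonneg.2 hx.2)]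
    push_cast
    ring_nf
  have key := Complex.betaIntegral_eq_Gamma_mul_div a b (by simpa using ha) (by simpa using hb)
  rw [hbeta, ← Complex.ofReal_add, Complex.Gamma_ofReal, Complex.Gamma_ofReal,
    Complex.Gamma_ofReal] at key
  exact_mod_cast key

theorem image_div_one_sub_Ioo : (fun x : ℝ => x / (1 - x)) '' Ioo 0 1 = Ioi 0 := by
  ext u
  simp only [mem_image, mem_Ioo, mem_Ioi]
  constructor
  · rintro ⟨x, ⟨hx0, hx1⟩, rfl⟩
    exact div_pos hx0 (by linarith)
  · intro hu
    refine ⟨u / (1 + u), ⟨by positivity, (div_lt_one (by linarith)).2 (by linarith)⟩, ?_⟩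
    field_simp
    ring

theorem injOn_div_one_sub : InjOn (fun x : ℝ => x / (1 - x)) (Ioo 0 1) := by
  intro x hx y hy h
  have : 1 - x ≠ 0 := by linarith [hx.2]
  have : 1 - y ≠ 0 := by linarith [hy.2]
  field_simp at h
  linarith

theorem hasDerivAt_div_one_sub {x : ℝ} (hx : x ≠ 1) :
    HasDerivAt (fun x : ℝ => x / (1 - x)) ((1 - x) ^ 2)⁻¹ x := by
  have h : 1 - x ≠ 0 := sub_ne_zero.2 hx.symm
  refine ((hasDerivAt_id' x).div ((hasDerivAt_id' x).const_sub 1) h).congr_deriv ?_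
  field_simp
  ring

theorem integral_Ioi_rpow_mul_one_add_rpow_neg {a b : ℝ} (ha : 0 < a) (hb : 0 < b) :
    ∫ u in Ioi (0 : ℝ), u ^ (a - 1) * (1 + u) ^ (-(a + b)) =
      Gamma a * Gamma b / Gamma (a + b) := by
  rw [← integral_rpow_mul_one_sub_rpow ha hb, intervalIntegral.integral_of_le zero_le_one,
    integral_Ioc_eq_integral_Ioo, ← image_div_one_sub_Ioo,
    integral_image_eq_integral_abs_deriv_smul measurableSet_Ioo
      (fun x hx => (hasDerivAt_div_one_sub hx.2.ne).hasDerivWithinAt) injOn_div_one_sub]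
  refine setIntegral_congr_fun measurableSet_Ioo fun x ⟨hx0, hx1⟩ => ?_
  have hy : 0 < 1 - x := sub_pos.2 hx1
  have hsum : 1 + x / (1 - x) = (1 - x)⁻¹ := by field_simp; ring
  rw [hsum, div_rpow hx0.le hy.le, inv_rpow hy.le, rpow_neg hy.le, inv_inv, smul_eq_mul,
    abs_of_pos (by positivity), ← rpow_natCast, ← rpow_neg hy.le, div_eq_mul_inv,
    ← rpow_neg hy.le, mul_left_comm, ← mul_assoc, mul_assoc, mul_assoc, ← rpow_add hy,
    ← rpow_add hy]
  congr 2
  push_cast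
  ring

theorem integral_Ioi_rpow_mul_one_add_sq_rpow_neg {a s : ℝ} (ha : 0 < a) (has : a < 2 * s) :
    ∫ r in Ioi (0 : ℝ), r ^ (a - 1) * (1 + r ^ 2) ^ (-s) =
      Gamma (a / 2) * Gamma (s - a / 2) / (2 * Gamma s) := by
  have hsubst := integral_comp_rpow_Ioi_of_pos two_pos
    (g := fun u : ℝ => u ^ (a / 2 - 1) * (1 + u) ^ (-(a / 2 + (s - a / 2))))
  rw [integral_Ioi_rpow_mul_one_add_rpow_neg (half_pos ha) (by linarith), add_sub_cancel]
    at hsubst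
  rw [mul_comm 2, ← div_div, ← hsubst, eq_div_iff two_ne_zero, ← integral_mul_const]
  refine setIntegral_congr_fun measurableSet_Ioi fun r (hr : 0 < r) => ?_
  have hpow : r ^ ((2 : ℝ) - 1) * r ^ (2 * (a / 2 - 1)) = r ^ (a - 1) := by
    rw [← rpow_add hr]
    ring_nf
  rw [smul_eq_mul, ← rpow_natCast, ← rpow_mul hr.le, Nat.cast_ofNat, ← hpow]
  ring

section InnerProductSpace

variable {E : Type*} [NormedAddCommGroup E] [InnerProductSpace ℝ E] [FiniteDimensional ℝ E]
  [MeasurableSpace E] [BorelSpace E]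

theorem integral_one_add_norm_sq_rpow_neg [Nontrivial E] {s : ℝ} (hs : finrank ℝ E / 2 < s) :
    ∫ y : E, (1 + ‖y‖ ^ 2) ^ (-s) =
      π ^ ((finrank ℝ E : ℝ) / 2) * Gamma (s - finrank ℝ E / 2) / Gamma s := by
  rw [integral_fun_norm_addHaar volume fun r => (1 + r ^ 2) ^ (-s)]
  set d := finrank ℝ E
  have hd : 0 < d := finrank_pos
  have hball : volume.real (Metric.ball (0 : E) 1) = π ^ ((d : ℝ) / 2) / Gamma (d / 2 + 1) := by
    rw [measureReal_def, InnerProductSpace.volume_ball, ENNReal.ofReal_one, one_pow, one_mul,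
      ENNReal.toReal_ofReal (by positivity), sqrt_eq_rpow, ← rpow_natCast, ← rpow_mul pi_nonneg,
      one_div_mul_eq_div]
  have hradial : ∫ r in Ioi (0 : ℝ), r ^ (d - 1) • (1 + r ^ 2) ^ (-s) =
      Gamma (d / 2) * Gamma (s - d / 2) / (2 * Gamma s) := by
    rw [← integral_Ioi_rpow_mul_one_add_sq_rpow_neg (a := d) (by positivity) (by linarith)]
    refine setIntegral_congr_fun measurableSet_Ioi fun r _ => ?_
    rw [smul_eq_mul, ← rpow_natCast, Nat.cast_sub hd, Nat.cast_one]
  have hd2 : (0 : ℝ) < d / 2 := div_pos (Nat.cast_pos.2 hd) two_pos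
  have := Gamma_pos_of_pos hd2
  have := Gamma_pos_of_pos (hd2.trans hs)
  rw [hball, hradial, Gamma_add_one hd2.ne', nsmul_eq_mul, smul_eq_mul]
  field_simp

theorem integral_pow_finrank_smul_comp_smul_sub {F : Type*} [NormedAddCommGroup F]
    [NormedSpace ℝ F] (g : E → F) (x : E) {lam : ℝ} (hlam : 0 < lam) :
    ∫ y : E, lam ^ finrank ℝ E • g (lam • (y - x)) = ∫ y : E, g y := by
  rw [integral_smul, integral_sub_right_eq_self (fun y => g (lam • y)),
    Measure.integral_comp_smul_of_nonneg volume g lam (hR := hlam.le), smul_inv_smul₀]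
  positivity

theorem integral_div_one_add_sq_mul_norm_sub_sq_rpow_finrank [Nontrivial E] (x : E) {lam : ℝ}
    (hlam : 0 < lam) :
    ∫ y : E, (lam / (1 + lam ^ 2 * ‖y - x‖ ^ 2)) ^ (finrank ℝ E : ℝ) =
      π ^ ((finrank ℝ E : ℝ) / 2) * Gamma (finrank ℝ E / 2) / Gamma (finrank ℝ E) := by
  have hd : (0 : ℝ) < finrank ℝ E := Nat.cast_pos.2 finrank_pos
  have hprofile : ∀ y : E, (lam / (1 + lam ^ 2 * ‖y - x‖ ^ 2)) ^ (finrank ℝ E : ℝ) =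
      lam ^ finrank ℝ E • (1 + ‖lam • (y - x)‖ ^ 2) ^ (-(finrank ℝ E : ℝ)) := by
    intro y
    rw [norm_smul, mul_pow, Real.norm_eq_abs, sq_abs, div_rpow hlam.le (by positivity),
      rpow_natCast, rpow_neg (by positivity), smul_eq_mul, div_eq_mul_inv]
  simp_rw [hprofile]
  rw [integral_pow_finrank_smul_comp_smul_sub (fun z => (1 + ‖z‖ ^ 2) ^ (-(finrank ℝ E : ℝ)))
    x hlam, integral_one_add_norm_sq_rpow_neg (by linarith), sub_half]

end InnerProductSpace

noncomputable def secondOrderSobolevConstant (d : ℝ) : ℝ :=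
  π ^ 2 * d * (d - 4) * (d ^ 2 - 4) * Gamma (d / 2) ^ (4 / d) * Gamma d ^ (-4 / d)

theorem secondOrderSobolevConstant_rpow {d : ℝ} (hd : 4 ≤ d) :
    secondOrderSobolevConstant d ^ (d / 4) =
      ((d - 4) * (d - 2) * d * (d + 2)) ^ (d / 4) * (π ^ (d / 2) * Gamma (d / 2) / Gamma d) := by
  have hd0 : 0 < d := by linarith
  set M := (d - 4) * (d - 2) * d * (d + 2)
  have hM : 0 ≤ M := by
    have : 0 ≤ d - 4 := by linarith
    have : 0 ≤ d - 2 := by linarith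
    positivity
  have hΓ := Gamma_pos_of_pos (half_pos hd0)
  have hΓ' := Gamma_pos_of_pos hd0
  have hsplit : secondOrderSobolevConstant d =
      π ^ (2 : ℝ) * M * (Gamma (d / 2) ^ (4 / d) * Gamma d ^ (-4 / d)) := by
    rw [secondOrderSobolevConstant, rpow_two]
    ring
  rw [hsplit, mul_rpow (by positivity) (by positivity), mul_rpow (by positivity) hM,
    mul_rpow (rpow_nonneg hΓ.le _) (rpow_nonneg hΓ'.le _), ← rpow_mul pi_nonneg,
    ← rpow_mul hΓ.le, ← rpow_mul hΓ'.le, div_mul_div_cancel₀' (by positivity), div_self hd0.ne',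
    rpow_one, show -4 / d * (d / 4) = -1 by field_simp, rpow_neg_one,
    show 2 * (d / 4) = d / 2 by ring]
  ring

theorem bubble_rpow_critical {n : ℕ} (hn : 4 < n) (x : EuclideanSpace ℝ (Fin n)) {lam : ℝ}
    (hlam : 0 ≤ lam) (y : EuclideanSpace ℝ (Fin n)) :
    bubble n x lam y ^ (2 * (n : ℝ) / ((n : ℝ) - 4)) =
      (((n : ℝ) - 4) * ((n : ℝ) - 2) * n * ((n : ℝ) + 2)) ^ ((n : ℝ) / 4) *
        (lam / (1 + lam ^ 2 * ‖y - x‖ ^ 2)) ^ (n : ℝ) := by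
  have hn' : (4 : ℝ) < n := by exact_mod_cast hn
  have hM : 0 ≤ ((n : ℝ) - 4) * ((n : ℝ) - 2) * n * ((n : ℝ) + 2) := by
    have : (0 : ℝ) ≤ n - 4 := by linarith
    have : (0 : ℝ) ≤ n - 2 := by linarith
    positivity
  rw [bubble, mul_rpow (rpow_nonneg hM _) (by positivity), ← rpow_mul hM,
    ← rpow_mul (by positivity)]
  have hn4 : (n : ℝ) - 4 ≠ 0 := by linarith
  congr 2
  · field_simp
    norm_num
  · field_simp

theorem bubble_critical_integral (n : ℕ) (hn : 5 ≤ n)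
    (x : EuclideanSpace ℝ (Fin n)) (lam : ℝ) (hlam : 0 < lam) :
    ∫ y : EuclideanSpace ℝ (Fin n), bubble n x lam y ^ (2 * (n : ℝ) / ((n : ℝ) - 4)) =
      (Real.pi ^ 2 * (n : ℝ) * ((n : ℝ) - 4) * ((n : ℝ) ^ 2 - 4) *
          Real.Gamma ((n : ℝ) / 2) ^ ((4 : ℝ) / (n : ℝ)) *
          Real.Gamma (n : ℝ) ^ (-(4 : ℝ) / (n : ℝ))) ^ ((n : ℝ) / 4) := by
  have hdim : finrank ℝ (EuclideanSpace ℝ (Fin n)) = n := finrank_euclideanSpace_fin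
  have : Nontrivial (EuclideanSpace ℝ (Fin n)) :=
    nontrivial_of_finrank_pos (R := ℝ) (by rw [hdim]; omega)
  have hprofile := integral_div_one_add_sq_mul_norm_sub_sq_rpow_finrank x hlam
  rw [hdim] at hprofile
  simp_rw [bubble_rpow_critical hn x hlam.le]
  rw [integral_const_mul, hprofile]
  exact (secondOrderSobolevConstant_rpow (by exact_mod_cast (by omega : 4 ≤ n))).symm
end
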